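/- arXiv:2310.17913 — 2 statements merged into one kernel-verified Lean document; each statement's English description precedes it below -/
import Mathlib

section
/- If (x*, ζ*, β*) minimizes F(x,ζ,β) = (1/2)Σᵢ[ζᵢ Aᵢ(x)² + βᵢ Gᵢ(x)²] over x ∈ X and (ζ,β) with ζᵢ, βᵢ > 0 and ζᵢβᵢ ≥ 1, where Gᵢ(x) = 1/Bᵢ(x), then x* minimizes H(x) = Σᵢ Aᵢ(x)/Bᵢ(x) over X, and H(x*) = F(x*, ζ*, β*). -/
/-!
For fixed `x`, minimizing `F x ζ β` over the feasible multipliers recovers `H x`: termwise,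
AM-GM gives `ζ a² + β g² ≥ 2 √(ζβ) a g ≥ 2 a g` with `a = Aᵢ(x)`, `g = 1/Bᵢ(x)`, and equality
holds at `ζ = g / a`, `β = a / g`. Hence `H` is the partial minimum of `F` in `(ζ, β)`, and
a joint minimizer of `F` yields a minimizer of `H`.
-/

open Finset

theorem isMin_and_eq_of_partial_min {X Y : Type*} (F : X → Y → ℝ) (H : X → ℝ) (S : Y → Prop)
    (hle : ∀ x y, S y → H x ≤ F x y) (hattain : ∀ x, ∃ y, S y ∧ F x y = H x)
    (xs : X) (ys : Y) (hys : S ys) (hmin : ∀ x y, S y → F xs ys ≤ F x y) :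
    (∀ x, H xs ≤ H x) ∧ H xs = F xs ys := by
  have hup : ∀ x, F xs ys ≤ H x := fun x => by
    obtain ⟨y, hy, hFy⟩ := hattain x
    exact hFy ▸ hmin x y hy
  exact ⟨fun x => (hle xs ys hys).trans (hup x), le_antisymm (hle xs ys hys) (hup xs)⟩

theorem two_mul_mul_le_of_one_le_mul {a g ζ β : ℝ} (hζ : 0 < ζ) (h : 1 ≤ ζ * β) :
    2 * a * g ≤ ζ * a ^ 2 + β * g ^ 2 := by
  -- `ζ (ζ a² + β g² - 2 a g) = (ζ a - g)² + (ζ β - 1) g²`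
  have key : 0 ≤ ζ * (ζ * a ^ 2 + β * g ^ 2 - 2 * a * g) := by
    nlinarith [sq_nonneg (ζ * a - g), mul_nonneg (sub_nonneg.2 h) (sq_nonneg g)]
  linarith [(mul_nonneg_iff_of_pos_left hζ).1 key]

theorem sum_mul_le_half_sum {ι : Type*} (s : Finset ι) {a g ζ β : ι → ℝ}
    (h : ∀ i ∈ s, 0 < ζ i ∧ 1 ≤ ζ i * β i) :
    ∑ i ∈ s, a i * g i ≤ 1 / 2 * ∑ i ∈ s, (ζ i * a i ^ 2 + β i * g i ^ 2) := by
  rw [mul_sum]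
  refine sum_le_sum fun i hi => ?_
  linarith [two_mul_mul_le_of_one_le_mul (a := a i) (g := g i) (h i hi).1 (h i hi).2]

theorem half_sum_eq_sum_mul {ι : Type*} (s : Finset ι) {a g : ι → ℝ}
    (ha : ∀ i ∈ s, a i ≠ 0) (hg : ∀ i ∈ s, g i ≠ 0) :
    1 / 2 * ∑ i ∈ s, (g i / a i * a i ^ 2 + a i / g i * g i ^ 2) = ∑ i ∈ s, a i * g i := by
  rw [mul_sum]
  refine sum_congr rfl fun i hi => ?_
  field_simp [ha i hi, hg i hi]
  ring

theorem stmt_2_general {X : Type*} (m : ℕ)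
    (A B : Fin m → X → ℝ)
    (hA : ∀ i x, 0 < A i x) (hB : ∀ i x, 0 < B i x)
    (F : X → (Fin m → ℝ) → (Fin m → ℝ) → ℝ)
    (hF : ∀ x ζ β, F x ζ β =
        (1/2) * ∑ i, (ζ i * (A i x)^2 + β i * (1 / B i x)^2))
    (H : X → ℝ) (hH : ∀ x, H x = ∑ i, A i x / B i x)
    (xs : X) (ζs βs : Fin m → ℝ)
    (hfeas : ∀ i, 0 < ζs i ∧ 0 < βs i ∧ 1 ≤ ζs i * βs i)
    (hmin : ∀ x (ζ β : Fin m → ℝ),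
        (∀ i, 0 < ζ i ∧ 0 < β i ∧ 1 ≤ ζ i * β i) →
        F xs ζs βs ≤ F x ζ β) :
    (∀ x, H xs ≤ H x) ∧ H xs = F xs ζs βs := by
  have hH' : ∀ x, H x = ∑ i, A i x * (1 / B i x) := fun x => by
    simp only [hH, mul_one_div]
  refine isMin_and_eq_of_partial_min (fun x p => F x p.1 p.2) H
    (fun p => ∀ i, 0 < p.1 i ∧ 0 < p.2 i ∧ 1 ≤ p.1 i * p.2 i) ?_ ?_ xs (ζs, βs) hfeas
    (fun x p hp => hmin x p.1 p.2 hp)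
  · intro x p hp
    rw [hH', hF]
    exact sum_mul_le_half_sum _ fun i _ => ⟨(hp i).1, (hp i).2.2⟩
  · intro x
    have hg : ∀ i, 0 < 1 / B i x := fun i => one_div_pos.2 (hB i x)
    refine ⟨(fun i => 1 / B i x / A i x, fun i => A i x / (1 / B i x)), fun i => ?_, ?_⟩
    · refine ⟨div_pos (hg i) (hA i x), div_pos (hA i x) (hg i), ?_⟩
      dsimp only
      rw [div_mul_div_comm, mul_comm (1 / B i x), div_self (mul_pos (hA i x) (hg i)).ne']
    · rw [hF, hH']
      exact half_sum_eq_sum_mul _ (fun i _ => (hA i x).ne') (fun i _ => (hg i).ne')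

theorem stmt_2 {X : Type*} [Nonempty X] (m : ℕ)
    (A B : Fin m → X → ℝ)
    (hA : ∀ i x, 0 < A i x) (hB : ∀ i x, 0 < B i x)
    (F : X → (Fin m → ℝ) → (Fin m → ℝ) → ℝ)
    (hF : ∀ x ζ β, F x ζ β =
        (1/2) * ∑ i, (ζ i * (A i x)^2 + β i * (1 / B i x)^2))
    (H : X → ℝ) (hH : ∀ x, H x = ∑ i, A i x / B i x)
    (xs : X) (ζs βs : Fin m → ℝ)
    (hfeas : ∀ i, 0 < ζs i ∧ 0 < βs i ∧ 1 ≤ ζs i * βs i)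
    (hmin : ∀ x (ζ β : Fin m → ℝ),
        (∀ i, 0 < ζ i ∧ 0 < β i ∧ 1 ≤ ζ i * β i) →
        F xs ζs βs ≤ F x ζ β) :
    (∀ x, H xs ≤ H x) ∧ H xs = F xs ζs βs :=
  stmt_2_general m A B hA hB F hF H hH xs ζs βs hfeas hmin
end

section
/- After the (ζ,β)-update, the value equals the sum-of-ratios value: if (ζ*, β*) minimizes F(x, ·, ·) for fixed x over {ζᵢ,βᵢ>0, ζᵢβᵢ≥1}, with Aᵢ(x) > 0 and Gᵢ(x) > 0, then F(x, ζ*, β*) = Σᵢ Aᵢ(x)·Gᵢ(x); in particular when Gᵢ = 1/Bᵢ this equals Σᵢ Aᵢ(x)/Bᵢ(x). -/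
theorem stmt_13 {X : Type*} (m : ℕ) (A G : Fin m → X → ℝ) (x : X)
    (hA : ∀ i, 0 < A i x) (hG : ∀ i, 0 < G i x)
    (F : X → (Fin m → ℝ) → (Fin m → ℝ) → ℝ)
    (hF : ∀ y ζ β, F y ζ β =
        (1/2) * ∑ i, (ζ i * (A i y)^2 + β i * (G i y)^2))
    (ζs βs : Fin m → ℝ)
    (hfeas : ∀ i, 0 < ζs i ∧ 0 < βs i ∧ 1 ≤ ζs i * βs i)
    (hmin : ∀ ζ β : Fin m → ℝ,
        (∀ i, 0 < ζ i ∧ 0 < β i ∧ 1 ≤ ζ i * β i) →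
        F x ζs βs ≤ F x ζ β) :
    F x ζs βs = ∑ i, A i x * G i x := by
  have hub : F x ζs βs ≤ ∑ i, A i x * G i x := by
    have h := hmin (fun i => G i x / A i x) (fun i => A i x / G i x) ?_
    · refine h.trans_eq ?_
      rw [hF]
      rw [Finset.mul_sum]
      refine Finset.sum_congr rfl fun i _ => ?_
      have hAi := (hA i).ne'
      have hGi := (hG i).ne'
      field_simp
      ring
    · intro i
      have hAi := hA i
      have hGi := hG i
      refine ⟨by positivity, by positivity, ?_⟩
      rw [div_mul_div_comm]
      rw [mul_comm (G i x)]
      rw [div_self (by positivity)]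
  have hlb : ∑ i, A i x * G i x ≤ F x ζs βs := by
    rw [hF, Finset.mul_sum]
    refine Finset.sum_le_sum fun i _ => ?_
    obtain ⟨hz, hb, hzb⟩ := hfeas i
    have hAi := hA i
    have hGi := hG i
    have key : 2 * (A i x * G i x) ≤ ζs i * (A i x)^2 + βs i * (G i x)^2 := by
      have h1 : 2 * (Real.sqrt (ζs i) * A i x) * (Real.sqrt (βs i) * G i x)
          ≤ (Real.sqrt (ζs i) * A i x)^2 + (Real.sqrt (βs i) * G i x)^2 :=
        two_mul_le_add_sq _ _
      have hs1 : Real.sqrt (ζs i) ^ 2 = ζs i := Real.sq_sqrt hz.le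
      have hs2 : Real.sqrt (βs i) ^ 2 = βs i := Real.sq_sqrt hb.le
      have hsb : 1 ≤ Real.sqrt (ζs i) * Real.sqrt (βs i) := by
        rw [← Real.sqrt_mul hz.le]
        rw [show (1:ℝ) = Real.sqrt 1 by simp]
        exact Real.sqrt_le_sqrt hzb
      calc 2 * (A i x * G i x) ≤
            2 * (Real.sqrt (ζs i) * A i x) * (Real.sqrt (βs i) * G i x) := by
            have : 1 * (A i x * G i x) ≤
                (Real.sqrt (ζs i) * Real.sqrt (βs i)) * (A i x * G i x) :=
              mul_le_mul_of_nonneg_right hsb (by positivity)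
            nlinarith
        _ ≤ (Real.sqrt (ζs i) * A i x)^2 + (Real.sqrt (βs i) * G i x)^2 := h1
        _ = ζs i * (A i x)^2 + βs i * (G i x)^2 := by
            rw [mul_pow, mul_pow, hs1, hs2]
    linarith
  linarith
end
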